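/- arXiv:1109.0968 — 2 statements merged into one kernel-verified Lean document; each statement's English description precedes it below -/
import Mathlib

section
/- The function h(x) = 10x^2 − (1−x)^3 ln(1−x) (extended by h(1)=10) is convex on [-1,1]; indeed h''(x) = 15 + 5x − 6(1−x)ln(1−x) ≥ 0 for all x ∈ [-1,1). -/
/-!
Writing `t = 1 - x`, the function is `10 x² - t³ log t`, and differentiating twice on `(-1, 1)`
gives `h''(x) = 20 - 5t - 6 t log t` with `t ∈ (0, 2]`. Since `t log t ≤ 2 log 2 < 1.4` there,
`h'' ≥ 20 - 10 - 8.4 > 0`. As `t³ log t → 0` when `t → 0⁺`, the function is continuous on all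
of `[-1, 1]`, so nonnegativity of `h''` on the interior gives convexity.
-/

open Set Real

lemma mul_log_le_mul_log_of_le {t a : ℝ} (ht : 0 ≤ t) (ha : 1 ≤ a) (hta : t ≤ a) :
    t * log t ≤ a * log a := by
  rcases le_or_gt t 1 with ht1 | ht1
  · exact (mul_nonpos_of_nonneg_of_nonpos ht (log_nonpos ht ht1)).trans
      (mul_nonneg (by linarith) (log_nonneg ha))
  · exact mul_le_mul hta (log_le_log (by linarith) hta) (log_nonneg ht1.le) (by linarith)

lemma continuous_pow_succ_mul_log (n : ℕ) : Continuous fun t : ℝ => t ^ (n + 1) * log t := by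
  have hsplit : (fun t : ℝ => t ^ (n + 1) * log t) = fun t => t ^ n * (t * log t) := by
    funext t; ring
  rw [hsplit]
  exact (continuous_pow n).mul continuous_mul_log

lemma hasDerivAt_pow_succ_mul_log (n : ℕ) {t : ℝ} (ht : t ≠ 0) :
    HasDerivAt (fun t => t ^ (n + 1) * log t) ((n + 1) * t ^ n * log t + t ^ n) t := by
  refine ((hasDerivAt_pow (n + 1) t).fun_mul (hasDerivAt_log ht)).congr_deriv ?_
  rw [Nat.add_sub_cancel, pow_succ]
  field_simp
  push_cast
  ring

lemma hasDerivAt_one_sub_pow_succ_mul_log (n : ℕ) {x : ℝ} (hx : x < 1) :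
    HasDerivAt (fun x => (1 - x) ^ (n + 1) * log (1 - x))
      (-((n + 1) * (1 - x) ^ n * log (1 - x) + (1 - x) ^ n)) x :=
  (hasDerivAt_pow_succ_mul_log n (sub_pos.2 hx).ne').comp_const_sub 1 x

lemma hasDerivAt_one_sub_pow (n : ℕ) (x : ℝ) :
    HasDerivAt (fun x : ℝ => (1 - x) ^ (n + 1)) (-((n + 1) * (1 - x) ^ n)) x := by
  simpa using (hasDerivAt_pow (n + 1) (1 - x)).comp_const_sub 1 x

/-- `h(x) = 10x² − (1−x)³ ln(1−x)` (with `Real.log 0 = 0`, so `h(1) = 10`) is convex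
on `[-1,1]`; indeed `h''(x) = 15 + 5x − 6(1−x)ln(1−x) ≥ 0` for all `x ∈ [-1,1)`. -/
theorem stmt9 :
    ConvexOn ℝ (Icc (-1:ℝ) 1)
      (fun x => 10 * x ^ 2 - (1 - x) ^ 3 * Real.log (1 - x)) ∧
    ∀ x ∈ Ico (-1:ℝ) 1, 0 ≤ 15 + 5 * x - 6 * (1 - x) * Real.log (1 - x) := by
  have h''_nonneg : ∀ x ∈ Ico (-1:ℝ) 1, 0 ≤ 15 + 5 * x - 6 * (1 - x) * log (1 - x) := by
    rintro x ⟨hx₁, hx₂⟩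
    have hmul_log := mul_log_le_mul_log_of_le (t := 1 - x) (a := 2) (by linarith) one_le_two
      (by linarith)
    linarith [log_two_lt_d9]
  refine ⟨?_, h''_nonneg⟩
  have hcont : Continuous fun x : ℝ => 10 * x ^ 2 - (1 - x) ^ 3 * log (1 - x) :=
    (continuous_const.mul (continuous_pow 2)).sub
      ((continuous_pow_succ_mul_log 2).comp (continuous_const.sub continuous_id))
  refine convexOn_of_hasDerivWithinAt2_nonneg (convex_Icc _ _) hcont.continuousOn
    (f' := fun x => 20 * x + 3 * ((1 - x) ^ 2 * log (1 - x)) + (1 - x) ^ 2)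
    (f'' := fun x => 15 + 5 * x - 6 * (1 - x) * log (1 - x))
    (fun x hx => ?_) (fun x hx => ?_) (fun x hx => ?_)
  all_goals rw [interior_Icc] at hx
  · refine (((hasDerivAt_pow 2 x).const_mul 10).fun_sub
      (hasDerivAt_one_sub_pow_succ_mul_log 2 hx.2)).hasDerivWithinAt.congr_deriv ?_
    norm_num
    ring
  · refine ((((hasDerivAt_id' x).const_mul 20).fun_add
      ((hasDerivAt_one_sub_pow_succ_mul_log 1 hx.2).const_mul 3)).fun_add
      (hasDerivAt_one_sub_pow 1 x)).hasDerivWithinAt.congr_deriv ?_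
    norm_num
    ring
  · exact h''_nonneg x ⟨hx.1.le, hx.2⟩
end

section
/- For every k ∈ ℕ and α ∈ (0,k) with α/2 ∉ ℕ, the k-th modulus of smoothness of |x|^α on [-1,1] satisfies ω_k(|x|^α, δ) ≤ c(α) min{1, δ^α} for all δ > 0, for some constant c(α) depending only on α (take k = ⌈α⌉). -/
open Set Finset

/-- `k`-th symmetric difference `Δ_h^k(f,x)` (the defining sum). -/
noncomputable def symmDiffK (k : ℕ) (h : ℝ) (f : ℝ → ℝ) (x : ℝ) : ℝ :=
  ∑ i ∈ Finset.range (k + 1),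
    ((-1 : ℝ)) ^ (k - i) * (k.choose i : ℝ) * f (x - k * h / 2 + i * h)

/-- `k`-th modulus of smoothness on `[-1,1]`. -/
noncomputable def modulus (k : ℕ) (f : ℝ → ℝ) (t : ℝ) : ℝ :=
  sSup { d | ∃ h x : ℝ, 0 ≤ h ∧ h ≤ t ∧ |x - k * h / 2| ≤ 1 ∧ |x + k * h / 2| ≤ 1 ∧
    d = |symmDiffK k h f x| }

/-!
Write `Δ_h^k(f, x)` as the iterated forward difference `(fwdDiff h)^[k] f` at the left node
`y = x - k h / 2`. If all nodes lie at distance at least `h` from the origin, `k` applications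
of the mean value inequality bound the difference of `|t| ^ α` by
`h ^ k * sup |α (α - 1) ⋯ (α - k + 1)| |t| ^ (α - k) ≤ |α (α - 1) ⋯ (α - k + 1)| h ^ α`,
because `α < k`. Otherwise every node lies within `(k + 1) h` of the origin, and the crude bound
`2 ^ k * max |f|` gives `2 ^ k (k + 1) ^ α h ^ α`. For `δ ≥ 1` the nodes lie in `[-1, 1]`, so the
difference is at most `2 ^ k`.
-/

lemma symmDiffK_eq_fwdDiff_iter (k : ℕ) (h : ℝ) (f : ℝ → ℝ) (x : ℝ) :
    symmDiffK k h f x = (fwdDiff h)^[k] f (x - k * h / 2) := by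
  rw [symmDiffK, fwdDiff_iter_eq_sum_shift]
  refine Finset.sum_congr rfl fun i _ => ?_
  simp [zsmul_eq_mul, nsmul_eq_mul]

section AddGroup

variable {M G : Type*}

lemma fwdDiff_iter_zero_left [AddCommMonoid M] [AddCommGroup G] (f : M → G) {k : ℕ}
    (hk : k ≠ 0) : (fwdDiff 0)^[k] f = 0 := by
  obtain ⟨k, rfl⟩ := Nat.exists_eq_succ_of_ne_zero hk
  rw [Function.iterate_succ']
  funext y
  simp [fwdDiff]

lemma fwdDiff_iter_comp_neg [AddCommGroup M] [AddCommGroup G] (h : M) (f : M → G) (k : ℕ)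
    (y : M) :
    (fwdDiff h)^[k] (fun t => f (-t)) y = (-1 : ℤ) ^ k • (fwdDiff h)^[k] f (-y - k • h) := by
  induction k generalizing y with
  | zero => simp
  | succ k ih =>
    rw [Function.iterate_succ_apply', fwdDiff, ih, ih, Function.iterate_succ_apply', fwdDiff,
      pow_succ, mul_neg_one, neg_smul, smul_sub, succ_nsmul]
    abel_nf

lemma norm_fwdDiff_iter_le [AddCommMonoid M] [SeminormedAddCommGroup G] (h : M) (f : M → G)
    {C : ℝ} (k : ℕ) (y : M) (hf : ∀ i ≤ k, ‖f (y + i • h)‖ ≤ C) :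
    ‖(fwdDiff h)^[k] f y‖ ≤ 2 ^ k * C := by
  induction k generalizing y with
  | zero => simpa using hf 0 le_rfl
  | succ k ih =>
    have hyh : ‖(fwdDiff h)^[k] f (y + h)‖ ≤ 2 ^ k * C :=
      ih (y + h) fun i hi => by simpa [add_assoc, succ_nsmul'] using hf (i + 1) (by omega)
    have hy : ‖(fwdDiff h)^[k] f y‖ ≤ 2 ^ k * C := ih y fun i hi => hf i (by omega)
    rw [Function.iterate_succ_apply', fwdDiff, pow_succ]
    linarith [norm_sub_le ((fwdDiff h)^[k] f (y + h)) ((fwdDiff h)^[k] f y)]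

end AddGroup

section Derivative

variable {E : Type*} [NormedAddCommGroup E] [NormedSpace ℝ E]

lemma hasDerivAt_fwdDiff_iter {f f' : ℝ → E} {h : ℝ} (hh : 0 ≤ h) (k : ℕ) {y : ℝ}
    (hf : ∀ t ∈ Icc y (y + k * h), HasDerivAt f (f' t) t) :
    HasDerivAt ((fwdDiff h)^[k] f) ((fwdDiff h)^[k] f' y) y := by
  induction k generalizing y with
  | zero => simpa using hf y (by simp)
  | succ k ih =>
    have hy : HasDerivAt ((fwdDiff h)^[k] f) ((fwdDiff h)^[k] f' y) y :=
      ih fun t ht => hf t ⟨ht.1, by push_cast; linarith [ht.2]⟩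
    have hyh : HasDerivAt ((fwdDiff h)^[k] f) ((fwdDiff h)^[k] f' (y + h)) (y + h) :=
      ih fun t ht => hf t ⟨by linarith [ht.1], by push_cast; linarith [ht.2]⟩
    rw [Function.iterate_succ']
    exact (hyh.comp_add_const y h).sub hy

/-- `F j` plays the role of the `j`-th derivative of `F 0`. -/
theorem norm_fwdDiff_iter_le_of_hasDerivAt (F : ℕ → ℝ → E) {h M : ℝ} (hh : 0 ≤ h) (k : ℕ)
    {y : ℝ} (hF : ∀ j < k, ∀ t ∈ Icc y (y + k * h), HasDerivAt (F j) (F (j + 1) t) t)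
    (hM : ∀ t ∈ Icc y (y + k * h), ‖F k t‖ ≤ M) :
    ‖(fwdDiff h)^[k] (F 0) y‖ ≤ h ^ k * M := by
  induction k generalizing F y with
  | zero => simpa using hM y (by simp)
  | succ k ih =>
    have hsub : ∀ z ∈ Icc y (y + h), Icc z (z + k * h) ⊆ Icc y (y + (k + 1 : ℕ) * h) :=
      fun z hz t ht => ⟨hz.1.trans ht.1, by push_cast; linarith [ht.2, hz.2]⟩
    have hderiv : ∀ z ∈ Icc y (y + h),
        HasDerivAt ((fwdDiff h)^[k] (F 0)) ((fwdDiff h)^[k] (F 1) z) z := fun z hz =>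
      hasDerivAt_fwdDiff_iter hh k fun t ht => hF 0 (by omega) t (hsub z hz ht)
    have hbound : ∀ z ∈ Icc y (y + h), ‖(fwdDiff h)^[k] (F 1) z‖ ≤ h ^ k * M := fun z hz =>
      ih (fun j => F (j + 1)) (fun j hj t ht => hF (j + 1) (by omega) t (hsub z hz ht))
        (fun t ht => hM t (hsub z hz ht))
    have hmvt := norm_image_sub_le_of_norm_deriv_le_segment'
      (fun z hz => (hderiv z hz).hasDerivWithinAt) (fun z hz => hbound z (Ico_subset_Icc_self hz))
      (y + h) (right_mem_Icc.2 (by linarith))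
    rw [Function.iterate_succ_apply', fwdDiff, pow_succ, mul_right_comm]
    simpa using hmvt

end Derivative

lemma hasDerivAt_abs_rpow_of_pos (p : ℝ) {t : ℝ} (ht : 0 < t) :
    HasDerivAt (fun s => |s| ^ p) (p * |t| ^ (p - 1)) t := by
  have hev : (fun s => |s| ^ p) =ᶠ[nhds t] fun s => s ^ p :=
    (eventually_gt_nhds ht).mono fun s hs => by simp only [abs_of_pos hs]
  rw [abs_of_pos ht]
  exact (Real.hasDerivAt_rpow_const (Or.inl ht.ne')).congr_of_eventuallyEq hev

lemma abs_fwdDiff_iter_abs_rpow_le_of_le {α h y : ℝ} {k : ℕ} (hk : α ≤ k) (hh : 0 < h)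
    (hy : h ≤ y) :
    |(fwdDiff h)^[k] (fun t => |t| ^ α) y| ≤ |(descPochhammer ℝ k).eval α| * h ^ α := by
  set F : ℕ → ℝ → ℝ := fun j t => (descPochhammer ℝ j).eval α * |t| ^ (α - j)
  have hF0 : F 0 = fun t => |t| ^ α := by simp [F]
  have hderiv : ∀ j < k, ∀ t ∈ Icc y (y + k * h), HasDerivAt (F j) (F (j + 1) t) t := by
    intro j _ t ht
    refine ((hasDerivAt_abs_rpow_of_pos (α - j) (hh.trans_le (hy.trans ht.1))).const_mul
      ((descPochhammer ℝ j).eval α)).congr_deriv ?_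
    simp only [F, descPochhammer_succ_eval]
    push_cast
    ring_nf
  have hM : ∀ t ∈ Icc y (y + k * h), ‖F k t‖ ≤ |(descPochhammer ℝ k).eval α| * h ^ (α - k) := by
    intro t ht
    have hht : h ≤ |t| := (hy.trans ht.1).trans (le_abs_self t)
    simp only [F, Real.norm_eq_abs, abs_mul, Real.abs_rpow_of_nonneg (abs_nonneg t), abs_abs]
    exact mul_le_mul_of_nonneg_left (Real.rpow_le_rpow_of_nonpos hh hht (by linarith))
      (abs_nonneg _)
  have hkey := norm_fwdDiff_iter_le_of_hasDerivAt F hh.le k hderiv hM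
  rw [hF0, Real.norm_eq_abs] at hkey
  calc _ ≤ h ^ k * (|(descPochhammer ℝ k).eval α| * h ^ (α - k)) := hkey
    _ = |(descPochhammer ℝ k).eval α| * h ^ α := by
      rw [mul_left_comm, ← Real.rpow_natCast, ← Real.rpow_add hh, add_sub_cancel]

lemma abs_fwdDiff_iter_abs_rpow_le_two_pow {α h y : ℝ} (hα : 0 ≤ α) (hh : 0 ≤ h) (k : ℕ)
    (hy : -1 ≤ y) (hyk : y + k * h ≤ 1) :
    |(fwdDiff h)^[k] (fun t => |t| ^ α) y| ≤ 2 ^ k := by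
  have hnodes : ∀ i ≤ k, ‖|y + i • h| ^ α‖ ≤ 1 := by
    intro i hi
    have hik : (i : ℝ) ≤ k := by exact_mod_cast hi
    rw [Real.norm_eq_abs, abs_of_nonneg (by positivity), nsmul_eq_mul]
    refine Real.rpow_le_one (abs_nonneg _) (abs_le.2 ⟨?_, ?_⟩) hα <;>
      nlinarith [(Nat.cast_nonneg i : (0 : ℝ) ≤ i)]
  simpa using norm_fwdDiff_iter_le h (fun t => |t| ^ α) k y hnodes

lemma abs_fwdDiff_iter_abs_rpow_le {α h : ℝ} {k : ℕ} (hα : 0 < α) (hk : α < k) (hh : 0 ≤ h)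
    (y : ℝ) :
    |(fwdDiff h)^[k] (fun t => |t| ^ α) y| ≤
      max (2 ^ k * ((k : ℝ) + 1) ^ α) |(descPochhammer ℝ k).eval α| * h ^ α := by
  rcases hh.eq_or_lt with rfl | hh
  · have hk0 : k ≠ 0 := by rintro rfl; exact (hα.trans hk).ne (Nat.cast_zero).symm
    simp [fwdDiff_iter_zero_left _ hk0, Real.zero_rpow hα.ne']
  by_cases hright : h ≤ y
  · exact (abs_fwdDiff_iter_abs_rpow_le_of_le hk.le hh hright).trans
      (by gcongr; exact le_max_right _ _)
  by_cases hleft : y + k * h ≤ -h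
  · have hreflect : (fwdDiff h)^[k] (fun t => |t| ^ α) y =
        (-1 : ℤ) ^ k • (fwdDiff h)^[k] (fun t => |t| ^ α) (-y - k * h) := by
      simpa [nsmul_eq_mul] using fwdDiff_iter_comp_neg h (fun t => |t| ^ α) k y
    rw [hreflect, abs_zsmul, abs_pow, abs_neg, abs_one, one_pow, one_smul]
    exact (abs_fwdDiff_iter_abs_rpow_le_of_le hk.le hh (by linarith)).trans
      (by gcongr; exact le_max_right _ _)
  have hnodes : ∀ i ≤ k, ‖|y + i • h| ^ α‖ ≤ (k + 1) ^ α * h ^ α := by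
    intro i hi
    have hik : (i : ℝ) ≤ k := by exact_mod_cast hi
    have hnode : |y + i • h| ≤ (k + 1) * h := by
      rw [nsmul_eq_mul, abs_le]
      constructor <;> nlinarith [(Nat.cast_nonneg i : (0 : ℝ) ≤ i)]
    rw [Real.norm_eq_abs, abs_of_nonneg (by positivity), ← Real.mul_rpow (by positivity) hh.le]
    exact Real.rpow_le_rpow (abs_nonneg _) hnode hα.le
  calc _ ≤ 2 ^ k * ((k + 1) ^ α * h ^ α) := by
        rw [← Real.norm_eq_abs]
        exact norm_fwdDiff_iter_le h (fun t => |t| ^ α) k y hnodes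
    _ ≤ _ := by rw [← mul_assoc]; gcongr; exact le_max_left _ _

theorem stmt12_general (k : ℕ) (α : ℝ) (h0 : 0 < α) (hk : α < k) :
    ∃ c : ℝ, 0 < c ∧ ∀ δ : ℝ, 0 < δ →
      modulus k (fun x => |x| ^ α) δ ≤ c * min 1 (δ ^ α) := by
  set C := max (2 ^ k * (k + 1 : ℝ) ^ α) |(descPochhammer ℝ k).eval α|
  refine ⟨max (2 ^ k) C, lt_max_of_lt_left (by positivity), fun δ hδ => ?_⟩
  refine Real.sSup_le ?_ (by positivity)
  rintro _ ⟨h, x, hh, hhδ, hx₁, hx₂, rfl⟩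
  rw [symmDiffK_eq_fwdDiff_iter]
  rcases le_total 1 δ with hδ1 | hδ1
  · rw [min_eq_left (Real.one_le_rpow hδ1 h0.le), mul_one]
    exact (abs_fwdDiff_iter_abs_rpow_le_two_pow h0.le hh k (by linarith [(abs_le.1 hx₁).1])
      (by linarith [(abs_le.1 hx₂).2])).trans (le_max_left _ _)
  · rw [min_eq_right (Real.rpow_le_one hδ.le hδ1 h0.le)]
    calc _ ≤ C * h ^ α := abs_fwdDiff_iter_abs_rpow_le h0 hk hh _
      _ ≤ max (2 ^ k) C * δ ^ α := by
        gcongr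
        exact le_max_right _ _

theorem stmt12 (k : ℕ) (α : ℝ) (h0 : 0 < α) (hk : α < k) (hceil : k = ⌈α⌉₊)
    (hhalf : ∀ m : ℕ, α ≠ 2 * m) :
    ∃ c : ℝ, 0 < c ∧ ∀ δ : ℝ, 0 < δ →
      modulus k (fun x => |x| ^ α) δ ≤ c * min 1 (δ ^ α) :=
  stmt12_general k α h0 hk
end
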